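/- Suppose the null hypothesis Y ⊥ X | Z holds, and the resamples X^(1), ..., X^(B) are drawn i.i.d. from the conditional distribution of X given Z, conditionally independent of (X, Y) given Z. Then the B+1 random vectors (X, Y, Z), (X^(1), Y, Z), ..., (X^(B), Y, Z) are exchangeable in their first coordinates, i.e., conditionally on (Y,Z), the vector (X, X^(1), ..., X^(B)) is exchangeable. -/

import Mathlib

/-!
Under the null hypothesis the conditional law of `(X, X^(1), …, X^(B))` given `(Y, Z) = (y, z)`
is the product of `B + 1` copies of the law of `X` given `Z = z`: the resampling hypothesis
splits off the resamples, and `Y ⊥ X | Z` splits `Y` off `X`. A product `∏ i, g (v i)` is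
invariant under permuting the coordinates of `v`.
-/

open Finset

open Classical in
/-- Probability of an event `S` under the weight function `p` on a finite sample space. -/
noncomputable def Pr {Ω : Type*} [Fintype Ω] (p : Ω → ℝ) (S : Ω → Prop) : ℝ :=
  ∑ ω, if S ω then p ω else 0

open Classical in
lemma Pr_congr {Ω : Type*} [Fintype Ω] (p : Ω → ℝ) {S T : Ω → Prop}
    (h : ∀ ω, S ω ↔ T ω) : Pr p S = Pr p T := by
  simp only [Pr, h]

lemma forall_perm_apply_eq_iff {Ω ι α : Type*} (V : ι → Ω → α) (π : Equiv.Perm ι) (v : ι → α)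
    (ω : Ω) : (∀ i, V (π i) ω = v i) ↔ ∀ i, V i ω = v (π.symm i) := by
  rw [← π.symm.forall_congr_right]
  simp

section Factorization

variable {Ω 𝒳 𝒴 𝒵 : Type*} [Fintype Ω] (p : Ω → ℝ)
  (X : Ω → 𝒳) (Y : Ω → 𝒴) (Z : Ω → 𝒵) {B : ℕ} (Xs : Fin B → Ω → 𝒳)

lemma Pr_cons_eq_mul_prod_of_condIndep {y : 𝒴} {z : 𝒵} (hz : Pr p (fun ω => Z ω = z) ≠ 0)
    (hCI : ∀ x, Pr p (fun ω => Y ω = y ∧ X ω = x ∧ Z ω = z) / Pr p (fun ω => Z ω = z)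
        = (Pr p (fun ω => Y ω = y ∧ Z ω = z) / Pr p (fun ω => Z ω = z))
          * (Pr p (fun ω => X ω = x ∧ Z ω = z) / Pr p (fun ω => Z ω = z)))
    (hresample : ∀ (x : 𝒳) (v : Fin B → 𝒳),
        Pr p (fun ω => X ω = x ∧ Y ω = y ∧ (∀ b, Xs b ω = v b) ∧ Z ω = z)
            / Pr p (fun ω => Z ω = z)
          = (Pr p (fun ω => X ω = x ∧ Y ω = y ∧ Z ω = z) / Pr p (fun ω => Z ω = z))
            * ∏ b, (Pr p (fun ω => X ω = v b ∧ Z ω = z) / Pr p (fun ω => Z ω = z)))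
    (w : Fin (B + 1) → 𝒳) :
    Pr p (fun ω => Y ω = y ∧ Z ω = z ∧
        ∀ i, Fin.cons (α := fun _ : Fin (B + 1) => Ω → 𝒳) X Xs i ω = w i)
      = Pr p (fun ω => Y ω = y ∧ Z ω = z)
          * ∏ i, (Pr p (fun ω => X ω = w i ∧ Z ω = z) / Pr p (fun ω => Z ω = z)) := by
  set Pz := Pr p (fun ω => Z ω = z)
  have hcons : Pr p (fun ω => Y ω = y ∧ Z ω = z ∧
        ∀ i, Fin.cons (α := fun _ : Fin (B + 1) => Ω → 𝒳) X Xs i ω = w i)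
      = Pr p (fun ω => X ω = w 0 ∧ Y ω = y ∧ (∀ b, Xs b ω = w b.succ) ∧ Z ω = z) :=
    Pr_congr p fun ω => by
      simp only [Fin.forall_fin_succ, Fin.cons_zero, Fin.cons_succ]
      tauto
  have hswap : Pr p (fun ω => X ω = w 0 ∧ Y ω = y ∧ Z ω = z)
      = Pr p (fun ω => Y ω = y ∧ X ω = w 0 ∧ Z ω = z) :=
    Pr_congr p fun ω => by tauto
  have hres := hresample (w 0) (fun b => w b.succ)
  rw [hswap, hCI, div_eq_iff hz] at hres
  rw [hcons, hres, Fin.prod_univ_succ]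
  field_simp

end Factorization

theorem stmt5_general {Ω 𝒳 𝒴 𝒵 : Type*} [Fintype Ω] (p : Ω → ℝ)
    (X : Ω → 𝒳) (Y : Ω → 𝒴) (Z : Ω → 𝒵) (B : ℕ) (Xs : Fin B → Ω → 𝒳)
    -- null hypothesis: Y ⊥ X | Z
    (hCI : ∀ (y : 𝒴) (x : 𝒳) (z : 𝒵), 0 < Pr p (fun ω => Z ω = z) →
      Pr p (fun ω => Y ω = y ∧ X ω = x ∧ Z ω = z) / Pr p (fun ω => Z ω = z)
        = (Pr p (fun ω => Y ω = y ∧ Z ω = z) / Pr p (fun ω => Z ω = z))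
          * (Pr p (fun ω => X ω = x ∧ Z ω = z) / Pr p (fun ω => Z ω = z)))
    -- X^(1),...,X^(B) are i.i.d. from the conditional law of X given Z,
    -- conditionally independent of (X, Y) given Z
    (hresample : ∀ (z : 𝒵), 0 < Pr p (fun ω => Z ω = z) →
      ∀ (x : 𝒳) (y : 𝒴) (v : Fin B → 𝒳),
        Pr p (fun ω => X ω = x ∧ Y ω = y ∧ (∀ b, Xs b ω = v b) ∧ Z ω = z)
            / Pr p (fun ω => Z ω = z)
          = (Pr p (fun ω => X ω = x ∧ Y ω = y ∧ Z ω = z) / Pr p (fun ω => Z ω = z))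
            * ∏ b, (Pr p (fun ω => X ω = v b ∧ Z ω = z) / Pr p (fun ω => Z ω = z))) :
    -- conclusion: conditionally on (Y,Z), the vector (X, X^(1), ..., X^(B)) is exchangeable
    ∀ (π : Equiv.Perm (Fin (B + 1))) (y : 𝒴) (z : 𝒵), 0 < Pr p (fun ω => Z ω = z) →
      ∀ v : Fin (B + 1) → 𝒳,
        Pr p (fun ω => Y ω = y ∧ Z ω = z ∧ ∀ i, Fin.cons (α := fun _ : Fin (B + 1) => Ω → 𝒳) X Xs (π i) ω = v i)
          = Pr p (fun ω => Y ω = y ∧ Z ω = z ∧ ∀ i, Fin.cons (α := fun _ : Fin (B + 1) => Ω → 𝒳) X Xs i ω = v i) := by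
  intro π y z hz v
  have factor := Pr_cons_eq_mul_prod_of_condIndep p X Y Z Xs hz.ne'
    (fun x => hCI y x z hz) (fun x => hresample z hz x y)
  simp only [forall_perm_apply_eq_iff _ π]
  rw [factor, factor,
    Equiv.prod_comp π.symm (fun i => Pr p (fun ω => X ω = v i ∧ Z ω = z) / _)]

theorem stmt5 {Ω 𝒳 𝒴 𝒵 : Type*} [Fintype Ω] [Fintype 𝒳] [Fintype 𝒴] [Fintype 𝒵]
    (p : Ω → ℝ) (hp : ∀ ω, 0 ≤ p ω) (hp1 : ∑ ω, p ω = 1)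
    (X : Ω → 𝒳) (Y : Ω → 𝒴) (Z : Ω → 𝒵) (B : ℕ) (Xs : Fin B → Ω → 𝒳)
    -- null hypothesis: Y ⊥ X | Z
    (hCI : ∀ (y : 𝒴) (x : 𝒳) (z : 𝒵), 0 < Pr p (fun ω => Z ω = z) →
      Pr p (fun ω => Y ω = y ∧ X ω = x ∧ Z ω = z) / Pr p (fun ω => Z ω = z)
        = (Pr p (fun ω => Y ω = y ∧ Z ω = z) / Pr p (fun ω => Z ω = z))
          * (Pr p (fun ω => X ω = x ∧ Z ω = z) / Pr p (fun ω => Z ω = z)))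
    -- X^(1),...,X^(B) are i.i.d. from the conditional law of X given Z,
    -- conditionally independent of (X, Y) given Z
    (hresample : ∀ (z : 𝒵), 0 < Pr p (fun ω => Z ω = z) →
      ∀ (x : 𝒳) (y : 𝒴) (v : Fin B → 𝒳),
        Pr p (fun ω => X ω = x ∧ Y ω = y ∧ (∀ b, Xs b ω = v b) ∧ Z ω = z)
            / Pr p (fun ω => Z ω = z)
          = (Pr p (fun ω => X ω = x ∧ Y ω = y ∧ Z ω = z) / Pr p (fun ω => Z ω = z))
            * ∏ b, (Pr p (fun ω => X ω = v b ∧ Z ω = z) / Pr p (fun ω => Z ω = z))) :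
    -- conclusion: conditionally on (Y,Z), the vector (X, X^(1), ..., X^(B)) is exchangeable
    ∀ (π : Equiv.Perm (Fin (B + 1))) (y : 𝒴) (z : 𝒵), 0 < Pr p (fun ω => Z ω = z) →
      ∀ v : Fin (B + 1) → 𝒳,
        Pr p (fun ω => Y ω = y ∧ Z ω = z ∧ ∀ i, Fin.cons (α := fun _ : Fin (B + 1) => Ω → 𝒳) X Xs (π i) ω = v i)
          = Pr p (fun ω => Y ω = y ∧ Z ω = z ∧ ∀ i, Fin.cons (α := fun _ : Fin (B + 1) => Ω → 𝒳) X Xs i ω = v i) :=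
  stmt5_general p X Y Z B Xs hCI hresample
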